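/- For all integers m ≥ 0 and r with 1 ≤ r ≤ 7, one has ‖2^m · 6^r‖₂ = m + 3r. -/

import Mathlib

/-- `CanRepr l n m` means `n` can be expressed using exactly `m` copies of `l`
    combined with addition and multiplication (and parentheses). -/
inductive CanRepr (l : ℕ) : ℕ → ℕ → Prop
  | base : CanRepr l l 1
  | add {a b p q : ℕ} : CanRepr l a p → CanRepr l b q → CanRepr l (a + b) (p + q)
  | mul {a b p q : ℕ} : CanRepr l a p → CanRepr l b q → CanRepr l (a * b) (p + q)

/-- The `l`-complexity `‖n‖_l`: the minimal number of `l`'s needed to express `n`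
    using only addition and multiplication. (By convention `sInf ∅ = 0`.) -/
noncomputable def complexity (l n : ℕ) : ℕ := sInf {m | CanRepr l n m}

/-!
An expression with `k` twos has value at most `2 ^ k`. If `n = 2 ^ a * 3 ^ r` had cost
`k < a + 2 * r`, then still `2 ^ k < 4 * n`, because `(4 / 3) ^ r < 8` for `r ≤ 7`. Products split
`3`-smooth numbers into `3`-smooth factors, so by induction only a sum `n = x + y` is to be
excluded, and under `2 ^ k < 4 * n` one summand is `2` or `4` (two summands of cost at least `3`
lose a factor `8`). The remaining summand `n - 4` is too large for its budget, and so is `n - 2`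
when `a ≥ 2`: being `2` mod `4` it is not a product of two even numbers, so it is again a sum with
a summand `2` or `4`. For `a = 1` the numbers `2 * 3 ^ r - 2` are bounded by hand, by the same
argument applied to their factorisations into two even numbers.
-/

namespace CanRepr

variable {l n k : ℕ}

theorem cost_pos (h : CanRepr l n k) : 0 < k := by
  induction h <;> omega

theorem base_le (h : CanRepr l n k) : l ≤ n := by
  induction h with
  | base => rfl
  | add _ _ ha _ => omega
  | @mul a b _ _ _ _ ha _ =>
      rcases Nat.eq_zero_or_pos l with rfl | hl
      · exact Nat.zero_le _
      · exact ha.trans (Nat.le_mul_of_pos_right a (by omega))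

theorem dvd (h : CanRepr l n k) : l ∣ n := by
  induction h with
  | base => rfl
  | add _ _ ha hb => exact dvd_add ha hb
  | mul _ _ ha _ => exact ha.mul_right _

theorem le_pow (hl : 2 ≤ l) (h : CanRepr l n k) : n ≤ l ^ k := by
  induction h with
  | base => simp
  | @add _ _ p q hx hy ha hb =>
      have hp : l ≤ l ^ p := Nat.le_self_pow hx.cost_pos.ne' l
      have hq : l ≤ l ^ q := Nat.le_self_pow hy.cost_pos.ne' l
      rw [pow_add]
      linarith [Nat.add_le_mul (hl.trans hp) (hl.trans hq)]
  | mul _ _ ha hb => rw [pow_add]; exact Nat.mul_le_mul ha hb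

theorem lt_of_two_pow_lt {j : ℕ} (h : CanRepr 2 n k) (hj : 2 ^ j < n) : j < k :=
  (Nat.pow_lt_pow_iff_right (by norm_num)).1 (hj.trans_le (h.le_pow le_rfl))

theorem eq_two_of_cost_eq_one (h : CanRepr 2 n 1) : n = 2 := by
  generalize hk : 1 = k at h
  cases h with
  | base => rfl
  | add hx hy => have := hx.cost_pos; have := hy.cost_pos; omega
  | mul hx hy => have := hx.cost_pos; have := hy.cost_pos; omega

theorem eq_four_of_cost_eq_two (h : CanRepr 2 n 2) : n = 4 := by
  generalize hk : 2 = k at h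
  cases h with
  | base => omega
  | @add _ _ p q hx hy | @mul _ _ p q hx hy =>
      obtain rfl : p = 1 := by have := hy.cost_pos; have := hx.cost_pos; omega
      obtain rfl : q = 1 := by omega
      rw [hx.eq_two_of_cost_eq_one, hy.eq_two_of_cost_eq_one]

theorem cost_le_two_of_two_pow_lt {x y p q : ℕ} (hx : CanRepr 2 x p) (hy : CanRepr 2 y q)
    (hpq : p ≤ q) (h : 2 ^ (p + q) < 4 * (x + y)) : p ≤ 2 := by
  by_contra! hp
  have h8 : 2 ^ 3 ≤ 2 ^ p := Nat.pow_le_pow_right (by norm_num) hp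
  have hpq' : 2 ^ p ≤ 2 ^ q := Nat.pow_le_pow_right (by norm_num) hpq
  have := hx.le_pow le_rfl
  have := hy.le_pow le_rfl
  rw [pow_add] at h
  nlinarith

theorem exists_small_summand {x y p q : ℕ} (hx : CanRepr 2 x p) (hy : CanRepr 2 y q)
    (h : 2 ^ (p + q) < 4 * (x + y)) :
    ∃ z t, CanRepr 2 z t ∧
      (x + y = 2 + z ∧ p + q = t + 1 ∨ x + y = 4 + z ∧ p + q = t + 2) := by
  wlog hpq : p ≤ q generalizing x y p q
  · simpa only [add_comm x, add_comm p] using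
      this hy hx (by rwa [add_comm q, add_comm y]) (by omega)
  have := hx.cost_pos
  have := cost_le_two_of_two_pow_lt hx hy hpq h
  interval_cases p
  · exact ⟨y, q, hy, .inl ⟨by rw [hx.eq_two_of_cost_eq_one], by omega⟩⟩
  · exact ⟨y, q, hy, .inr ⟨by rw [hx.eq_four_of_cost_eq_two], by omega⟩⟩

/-- A representation of cost below `b` would be tight enough for a small summand, whose partner
is then too large for the remaining budget; so only products of two even numbers need checking. -/
theorem le_of_forall_mul {b : ℕ} (h : CanRepr 2 n k) (hb : 2 ^ b + 8 < 4 * n)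
    (hmul : ∀ c d p q, c ≤ d → 4 * (c * d) = n →
      CanRepr 2 (2 * c) p → CanRepr 2 (2 * d) q → b ≤ p + q) :
    b ≤ k := by
  by_contra! hk
  have hkb : 2 * 2 ^ k ≤ 2 ^ b := by
    rw [← pow_succ']; exact Nat.pow_le_pow_right (by norm_num) hk
  cases h with
  | base => omega
  | @add x y p q hx hy =>
      obtain ⟨z, t, hz, ⟨hn, hk⟩ | ⟨hn, hk⟩⟩ :=
        exists_small_summand hx hy (by omega)
      all_goals
        rw [hk, pow_succ] at hkb
        have := hz.le_pow le_rfl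
        have := hz.base_le
        omega
  | @mul x y p q hx hy =>
      obtain ⟨c, rfl⟩ := hx.dvd
      obtain ⟨d, rfl⟩ := hy.dvd
      rcases le_total c d with hcd | hdc
      · have := hmul c d p q hcd (by ring) hx hy
        omega
      · have := hmul d c q p hdc (by ring) hy hx
        omega

theorem le_of_mod_four_eq_two {b : ℕ} (h : CanRepr 2 n k) (hn : n % 4 = 2)
    (hb : 2 ^ b + 8 < 4 * n) : b ≤ k :=
  h.le_of_forall_mul hb fun _ _ _ _ _ hcd _ _ => by omega

end CanRepr

theorem six_le_of_canRepr_28 {k : ℕ} (h : CanRepr 2 28 k) : 6 ≤ k := by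
  refine h.le_of_forall_mul (by norm_num) fun c d p q hcd hn hp hq => ?_
  obtain rfl : c = 1 := by
    have : c ≤ 2 := by nlinarith
    interval_cases c <;> omega
  obtain rfl : d = 7 := by omega
  linarith [hp.cost_pos, hq.le_of_mod_four_eq_two (b := 5) (by norm_num) (by norm_num)]

theorem ten_le_of_canRepr_364 {k : ℕ} (h : CanRepr 2 364 k) : 10 ≤ k := by
  refine h.le_of_forall_mul (by norm_num) fun c d p q hcd hn hp hq => ?_
  obtain rfl | rfl : c = 1 ∨ c = 7 := by
    have : c ≤ 9 := by nlinarith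
    interval_cases c <;> omega
  · obtain rfl : d = 91 := by omega
    linarith [hp.cost_pos, hq.le_of_mod_four_eq_two (b := 9) (by norm_num) (by norm_num)]
  · obtain rfl : d = 13 := by omega
    linarith [hp.le_of_mod_four_eq_two (b := 5) (by norm_num) (by norm_num),
      hq.le_of_mod_four_eq_two (b := 6) (by norm_num) (by norm_num)]

theorem ten_le_of_canRepr_484 {k : ℕ} (h : CanRepr 2 484 k) : 10 ≤ k := by
  refine h.le_of_forall_mul (by norm_num) fun c d p q hcd hn hp hq => ?_
  obtain rfl | rfl : c = 1 ∨ c = 11 := by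
    have : c ≤ 11 := by nlinarith
    interval_cases c <;> omega
  · obtain rfl : d = 121 := by omega
    linarith [hp.cost_pos, hq.le_of_mod_four_eq_two (b := 9) (by norm_num) (by norm_num)]
  · obtain rfl : d = 11 := by omega
    linarith [hp.lt_of_two_pow_lt (j := 4) (by norm_num),
      hq.lt_of_two_pow_lt (j := 4) (by norm_num)]

theorem eleven_le_of_canRepr_728 {k : ℕ} (h : CanRepr 2 728 k) : 11 ≤ k := by
  refine h.le_of_forall_mul (by norm_num) fun c d p q hcd hn hp hq => ?_
  obtain rfl | rfl | rfl | rfl : c = 1 ∨ c = 2 ∨ c = 7 ∨ c = 13 := by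
    have : c ≤ 13 := by nlinarith
    interval_cases c <;> omega
  · obtain rfl : d = 182 := by omega
    linarith [hp.cost_pos, ten_le_of_canRepr_364 hq]
  · obtain rfl : d = 91 := by omega
    linarith [hp.lt_of_two_pow_lt (j := 1) (by norm_num),
      hq.le_of_mod_four_eq_two (b := 9) (by norm_num) (by norm_num)]
  · obtain rfl : d = 26 := by omega
    linarith [hp.le_of_mod_four_eq_two (b := 5) (by norm_num) (by norm_num),
      hq.lt_of_two_pow_lt (j := 5) (by norm_num)]
  · obtain rfl : d = 14 := by omega
    linarith [hp.le_of_mod_four_eq_two (b := 6) (by norm_num) (by norm_num),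
      hq.lt_of_two_pow_lt (j := 4) (by norm_num)]

theorem twelve_le_of_canRepr_1456 {k : ℕ} (h : CanRepr 2 1456 k) : 12 ≤ k := by
  refine h.le_of_forall_mul (by norm_num) fun c d p q hcd hn hp hq => ?_
  obtain rfl | rfl | rfl | rfl | rfl | rfl :
      c = 1 ∨ c = 2 ∨ c = 4 ∨ c = 7 ∨ c = 13 ∨ c = 14 := by
    have : c ≤ 19 := by nlinarith
    interval_cases c <;> omega
  · obtain rfl : d = 364 := by omega
    linarith [hp.cost_pos, eleven_le_of_canRepr_728 hq]
  · obtain rfl : d = 182 := by omega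
    linarith [hp.lt_of_two_pow_lt (j := 1) (by norm_num), ten_le_of_canRepr_364 hq]
  · obtain rfl : d = 91 := by omega
    linarith [hp.lt_of_two_pow_lt (j := 2) (by norm_num),
      hq.le_of_mod_four_eq_two (b := 9) (by norm_num) (by norm_num)]
  · obtain rfl : d = 52 := by omega
    linarith [hp.le_of_mod_four_eq_two (b := 5) (by norm_num) (by norm_num),
      hq.lt_of_two_pow_lt (j := 6) (by norm_num)]
  · obtain rfl : d = 28 := by omega
    linarith [hp.le_of_mod_four_eq_two (b := 6) (by norm_num) (by norm_num),
      hq.lt_of_two_pow_lt (j := 5) (by norm_num)]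
  · obtain rfl : d = 26 := by omega
    linarith [six_le_of_canRepr_28 hp, hq.lt_of_two_pow_lt (j := 5) (by norm_num)]

theorem fourteen_le_of_canRepr_4372 {k : ℕ} (h : CanRepr 2 4372 k) : 14 ≤ k := by
  refine h.le_of_forall_mul (by norm_num) fun c d p q hcd hn hp hq => ?_
  obtain rfl : c = 1 := by
    have : c ≤ 33 := by nlinarith
    interval_cases c <;> omega
  obtain rfl : d = 1093 := by omega
  linarith [hp.cost_pos, hq.le_of_mod_four_eq_two (b := 13) (by norm_num) (by norm_num)]

theorem CanRepr.two_mul_le_of_add_two_eq_two_mul_three_pow {z t r : ℕ} (h : CanRepr 2 z t)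
    (hz : z + 2 = 2 * 3 ^ r) (hr : r ≤ 7) : 2 * r ≤ t := by
  replace hz : z = 2 * 3 ^ r - 2 := by omega
  interval_cases r <;> norm_num at hz <;> subst hz
  · exact Nat.zero_le _
  · exact h.lt_of_two_pow_lt (j := 1) (by norm_num)
  · exact h.lt_of_two_pow_lt (j := 3) (by norm_num)
  · exact h.lt_of_two_pow_lt (j := 5) (by norm_num)
  · exact h.lt_of_two_pow_lt (j := 7) (by norm_num)
  · exact ten_le_of_canRepr_484 h
  · exact twelve_le_of_canRepr_1456 h
  · exact fourteen_le_of_canRepr_4372 h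

theorem four_pow_add_le_eight_mul_three_pow {r : ℕ} (hr0 : 0 < r) (hr : r ≤ 7) :
    4 ^ r + 17 ≤ 8 * 3 ^ r := by
  interval_cases r <;> norm_num

theorem CanRepr.add_two_mul_le_add_of_add_eq {x y p q a r : ℕ} (hx : CanRepr 2 x p)
    (hy : CanRepr 2 y q) (hxy : x + y = 2 ^ a * 3 ^ r) (hr : r ≤ 7) : a + 2 * r ≤ p + q := by
  have hn := hx.add hy
  rw [hxy] at hn
  rcases Nat.eq_zero_or_pos r with rfl | hr0
  · rw [pow_zero, mul_one] at hn
    simpa using (Nat.pow_le_pow_iff_right (by norm_num)).1 (hn.le_pow le_rfl)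
  by_contra! hk
  have ha : a ≠ 0 := by
    rintro rfl
    rw [pow_zero, one_mul] at hn
    exact absurd (Nat.prime_two.dvd_of_dvd_pow hn.dvd) (by norm_num)
  have h2a : 2 ≤ 2 ^ a := Nat.le_self_pow ha 2
  have hpow : 2 * 2 ^ (p + q) ≤ 2 ^ a * 4 ^ r := by
    rw [← pow_succ', show 4 = 2 ^ 2 by rfl, ← pow_mul, ← pow_add]
    exact Nat.pow_le_pow_right (by norm_num) hk
  have hcoef := Nat.mul_le_mul_left (2 ^ a) (four_pow_add_le_eight_mul_three_pow hr0 hr)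
  rw [mul_add, mul_left_comm] at hcoef
  obtain ⟨z, t, hz, ⟨hn, hk⟩ | ⟨hn, hk⟩⟩ :=
    CanRepr.exists_small_summand hx hy (by omega)
  · rcases eq_or_ne a 1 with rfl | ha1
    · have := hz.two_mul_le_of_add_two_eq_two_mul_three_pow (by omega) hr
      omega
    · have h4 : 4 ∣ 2 ^ a * 3 ^ r :=
        (pow_dvd_pow 2 (show 2 ≤ a by omega)).mul_right _
      rw [hk, pow_succ] at hpow
      have := hz.le_of_mod_four_eq_two (b := t + 1) (by omega) (by rw [pow_succ]; omega)
      omega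
  · rw [hk, pow_add] at hpow
    have := hz.le_pow le_rfl
    omega

theorem Nat.eq_two_pow_mul_three_pow_of_primeFactors_subset {n : ℕ} (hn0 : n ≠ 0)
    (hn : n.primeFactors ⊆ {2, 3}) : n = 2 ^ n.factorization 2 * 3 ^ n.factorization 3 := by
  conv_lhs => rw [← Nat.prod_factorization_pow_eq_self hn0]
  rw [Finsupp.prod_of_support_subset (s := {2, 3}) _ (by rwa [Nat.support_factorization]) _
    (by simp), Finset.prod_pair (by norm_num)]

theorem CanRepr.factorization_two_add_two_mul_factorization_three_le {n k : ℕ}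
    (h : CanRepr 2 n k) (hn : n.primeFactors ⊆ {2, 3}) (h3 : n.factorization 3 ≤ 7) :
    n.factorization 2 + 2 * n.factorization 3 ≤ k := by
  induction h with
  | base => simp [Nat.prime_two.factorization]
  | @add x y p q hx hy _ _ =>
      have hxy : x + y ≠ 0 := by have := hx.base_le; omega
      exact hx.add_two_mul_le_add_of_add_eq hy
        (Nat.eq_two_pow_mul_three_pow_of_primeFactors_subset hxy hn) h3
  | @mul x y p q hx hy ihx ihy =>
      have hx0 : x ≠ 0 := by have := hx.base_le; omega
      have hy0 : y ≠ 0 := by have := hy.base_le; omega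
      rw [Nat.primeFactors_mul hx0 hy0, Finset.union_subset_iff] at hn
      simp only [Nat.factorization_mul hx0 hy0, Finsupp.add_apply] at h3 ⊢
      have := ihx hn.1 (by omega)
      have := ihy hn.2 (by omega)
      omega

theorem Nat.primeFactors_two_pow_mul_three_pow_subset (a r : ℕ) :
    (2 ^ a * 3 ^ r).primeFactors ⊆ {2, 3} := by
  intro p hp
  obtain ⟨hp, hdvd, -⟩ := Nat.mem_primeFactors.1 hp
  rcases hp.dvd_mul.1 hdvd with h | h
  · simp [(Nat.prime_dvd_prime_iff_eq hp Nat.prime_two).1 (hp.dvd_of_dvd_pow h)]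
  · simp [(Nat.prime_dvd_prime_iff_eq hp Nat.prime_three).1 (hp.dvd_of_dvd_pow h)]

theorem CanRepr.add_two_mul_le {a r k : ℕ} (h : CanRepr 2 (2 ^ a * 3 ^ r) k) (hr : r ≤ 7) :
    a + 2 * r ≤ k := by
  have hfac := h.factorization_two_add_two_mul_factorization_three_le
    (Nat.primeFactors_two_pow_mul_three_pow_subset a r)
  simp only [Nat.factorization_mul (by positivity : 2 ^ a ≠ 0) (by positivity : 3 ^ r ≠ 0),
    Nat.factorization_pow, Nat.prime_two.factorization, Nat.prime_three.factorization] at hfac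
  simpa using hfac (by simpa using hr)

theorem CanRepr.pow {l n k m : ℕ} (h : CanRepr l n k) (hm : m ≠ 0) :
    CanRepr l (n ^ m) (k * m) := by
  induction m with
  | zero => contradiction
  | succ m ih =>
      rcases eq_or_ne m 0 with rfl | hm0
      · simpa using h
      · rw [pow_succ, mul_add_one]
        exact (ih hm0).mul h

theorem canRepr_six : CanRepr 2 6 3 := (CanRepr.base.add .base).add .base

theorem canRepr_two_pow_mul_six_pow (m : ℕ) {r : ℕ} (hr : 0 < r) :
    CanRepr 2 (2 ^ m * 6 ^ r) (m + 3 * r) := by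
  rcases eq_or_ne m 0 with rfl | hm
  · simpa [mul_comm] using canRepr_six.pow hr.ne'
  · simpa using (CanRepr.base.pow hm).mul (canRepr_six.pow hr.ne')

theorem stmt_12 (m r : ℕ) (hr1 : 1 ≤ r) (hr2 : r ≤ 7) :
    complexity 2 (2 ^ m * 6 ^ r) = m + 3 * r := by
  have hrepr := canRepr_two_pow_mul_six_pow m hr1
  refine le_antisymm (Nat.sInf_le hrepr) (le_csInf ⟨_, hrepr⟩ fun k hk => ?_)
  have h6 : 2 ^ m * 6 ^ r = 2 ^ (m + r) * 3 ^ r := by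
    rw [show 6 = 2 * 3 by rfl, mul_pow, pow_add, mul_assoc]
  have := (show CanRepr 2 (2 ^ (m + r) * 3 ^ r) k from h6 ▸ hk).add_two_mul_le hr2
  omega
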